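/- Let f : H → ℝ be a β-strongly convex differentiable function on a real Hilbert space H with minimizer x*, where β > 0. Let x : [0,∞) → H be a C² curve satisfying ẍ(t) + 2√β ẋ(t) + ∇f(x(t)) = 0 with ẋ(0) = 0. Then for all t ≥ 0, f(x(t)) - f(x*) ≤ e^{-√β t} (f(x(0)) - f(x*) + (β/2)‖x(0) - x*‖²). -/

import Mathlib

/-!
Along the flow, `E(t) = e^{√β t} (f(x t) - f x* + ½‖√β (x t - x*) + ẋ t‖²)` is nonincreasing:
using the equation of motion, `E'(t) e^{-√β t}` equals
`√β (f(x t) - f x* + (β/2)‖x t - x*‖² - ⟪∇f(x t), x t - x*⟫) - (√β/2)‖ẋ t‖²`,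
and strong convexity makes the first bracket nonpositive. Since `ẋ 0 = 0`, `E(0)` is the
right-hand side of the bound, and `f(x t) - f x* ≤ e^{-√β t} E(t)`.
-/

open scoped RealInnerProductSpace

section

variable {H : Type*} [NormedAddCommGroup H] [InnerProductSpace ℝ H]

theorem HasGradientAt.comp_hasDerivAt [CompleteSpace H] {f : H → ℝ} {g : H} {x : ℝ → H}
    {v : H} {t : ℝ} (hf : HasGradientAt f g (x t)) (hx : HasDerivAt x v t) :
    HasDerivAt (fun s => f (x s)) ⟪g, v⟫ t := by
  have h := hf.hasFDerivAt.comp_hasDerivAt t hx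
  simp only [InnerProductSpace.toDual_apply_apply] at h
  exact h

theorem antitone_exp_mul_of_hasDerivAt {b : ℝ} {E E' : ℝ → ℝ}
    (hE : ∀ t, HasDerivAt E (E' t) t) (hle : ∀ t, b * E t + E' t ≤ 0) :
    Antitone fun t => Real.exp (b * t) * E t := by
  have hd : ∀ t, HasDerivAt (fun t => Real.exp (b * t) * E t)
      (Real.exp (b * t) * (b * E t + E' t)) t := fun t => by
    have hexp : HasDerivAt (fun s => Real.exp (b * s)) (Real.exp (b * t) * b) t := by
      simpa using ((hasDerivAt_id t).const_mul b).exp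
    exact (hexp.mul (hE t)).congr_deriv (by ring)
  refine antitone_of_deriv_nonpos (fun t => (hd t).differentiableAt) fun t => ?_
  rw [(hd t).deriv]
  exact mul_nonpos_of_nonneg_of_nonpos (Real.exp_pos _).le (hle t)

theorem lyapunov_rate_nonpos {b F : ℝ} (hb : 0 ≤ b) {u w g : H}
    (h : F + b ^ 2 / 2 * ‖u‖ ^ 2 ≤ ⟪g, u⟫) :
    b * (F + ‖b • u + w‖ ^ 2 / 2) + (⟪g, w⟫ + ⟪b • u + w, -(b • w) - g⟫) ≤ 0 := by
  have hnorm : ‖b • u + w‖ ^ 2 = b ^ 2 * ‖u‖ ^ 2 + 2 * b * ⟪u, w⟫ + ‖w‖ ^ 2 := by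
    rw [norm_add_sq_real, norm_smul, real_inner_smul_left, Real.norm_of_nonneg hb]; ring
  have hinner : ⟪b • u + w, -(b • w) - g⟫ =
      -(b ^ 2 * ⟪u, w⟫) - b * ⟪g, u⟫ - b * ‖w‖ ^ 2 - ⟪g, w⟫ := by
    simp only [inner_add_left, inner_sub_right, inner_neg_right, real_inner_smul_left,
      real_inner_smul_right, real_inner_self_eq_norm_sq, real_inner_comm u g, real_inner_comm w g]
    ring
  rw [hnorm, hinner]
  nlinarith [mul_nonneg hb (sq_nonneg ‖w‖), mul_le_mul_of_nonneg_left h hb]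

/-- With `b = √β`, the paper's Lyapunov functional is `E t = exp (b t) * heavyBallEnergy b f x* x t`.
-/
noncomputable def heavyBallEnergy (b : ℝ) (f : H → ℝ) (xstar : H) (x : ℝ → H) (t : ℝ) : ℝ :=
  f (x t) - f xstar + ‖b • (x t - xstar) + deriv x t‖ ^ 2 / 2

section HeavyBall

variable [CompleteSpace H] {b : ℝ} {f : H → ℝ} {f' : H → H} {x : ℝ → H}

theorem hasDerivAt_heavyBallEnergy (hgrad : ∀ y, HasGradientAt f (f' y) y)
    (hx : Differentiable ℝ x) (hx' : Differentiable ℝ (deriv x))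
    (hode : ∀ t, deriv (deriv x) t + (2 * b) • deriv x t + f' (x t) = 0) (xstar : H) (t : ℝ) :
    HasDerivAt (heavyBallEnergy b f xstar x)
      (⟪f' (x t), deriv x t⟫ +
        ⟪b • (x t - xstar) + deriv x t, -(b • deriv x t) - f' (x t)⟫) t := by
  have hv : HasDerivAt (fun s => b • (x s - xstar) + deriv x s)
      (-(b • deriv x t) - f' (x t)) t := by
    refine ((((hx t).hasDerivAt.sub_const xstar).const_smul b).add
      (hx' t).hasDerivAt).congr_deriv ?_
    linear_combination (norm := module) hode t
  refine ((((hgrad (x t)).comp_hasDerivAt (hx t).hasDerivAt).sub_const (f xstar)).add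
    (hv.norm_sq.div_const 2)).congr_deriv ?_
  ring

theorem antitone_exp_mul_heavyBallEnergy {β : ℝ} (hβ : 0 ≤ β)
    (hgrad : ∀ y, HasGradientAt f (f' y) y)
    (hconv : ∀ y z : H, f y + ⟪f' y, z - y⟫ + (β / 2) * ‖z - y‖ ^ 2 ≤ f z)
    (hx : Differentiable ℝ x) (hx' : Differentiable ℝ (deriv x))
    (hode : ∀ t, deriv (deriv x) t + (2 * √β) • deriv x t + f' (x t) = 0) (xstar : H) :
    Antitone fun t => Real.exp (√β * t) * heavyBallEnergy (√β) f xstar x t := by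
  refine antitone_exp_mul_of_hasDerivAt (hasDerivAt_heavyBallEnergy hgrad hx hx' hode xstar)
    fun t => lyapunov_rate_nonpos (Real.sqrt_nonneg β) ?_
  have h := hconv (x t) xstar
  rw [← neg_sub (x t) xstar, inner_neg_right, norm_neg] at h
  rw [Real.sq_sqrt hβ]
  linarith

end HeavyBall

end

theorem stmt_4_general {H : Type*} [NormedAddCommGroup H] [InnerProductSpace ℝ H] [CompleteSpace H]
    (β : ℝ) (hβ : 0 < β)
    (f : H → ℝ) (f' : H → H)
    (hgrad : ∀ y, HasGradientAt f (f' y) y)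
    (hconv : ∀ y z : H, f y + ⟪f' y, z - y⟫ + (β / 2) * ‖z - y‖ ^ 2 ≤ f z)
    (xstar : H)
    (x : ℝ → H) (hx : ContDiff ℝ 2 x)
    (hode : ∀ t : ℝ,
      deriv (deriv x) t + (2 * Real.sqrt β) • deriv x t + f' (x t) = 0)
    (hv0 : deriv x 0 = 0) :
    ∀ t : ℝ, 0 ≤ t →
      f (x t) - f xstar ≤
        Real.exp (-Real.sqrt β * t) *
          (f (x 0) - f xstar + (β / 2) * ‖x 0 - xstar‖ ^ 2) := by
  intro t ht
  have hx' : Differentiable ℝ (deriv x) :=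
    ((contDiff_succ_iff_deriv (n := 1)).mp hx).2.2.differentiable one_ne_zero
  have hdecay := antitone_exp_mul_heavyBallEnergy hβ.le hgrad hconv
    (hx.differentiable (by norm_num)) hx' hode xstar ht
  have hE0 : heavyBallEnergy (√β) f xstar x 0 =
      f (x 0) - f xstar + (β / 2) * ‖x 0 - xstar‖ ^ 2 := by
    rw [heavyBallEnergy, hv0, add_zero, norm_smul, mul_pow,
      Real.norm_of_nonneg (Real.sqrt_nonneg β), Real.sq_sqrt hβ.le]
    ring
  simp only [mul_zero, Real.exp_zero, one_mul, hE0] at hdecay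
  calc f (x t) - f xstar ≤ heavyBallEnergy (√β) f xstar x t :=
      le_add_of_nonneg_right (by positivity)
    _ = Real.exp (-√β * t) * (Real.exp (√β * t) * heavyBallEnergy (√β) f xstar x t) := by
      rw [← mul_assoc, ← Real.exp_add, neg_mul, neg_add_cancel, Real.exp_zero, one_mul]
    _ ≤ _ := mul_le_mul_of_nonneg_left hdecay (Real.exp_pos _).le

theorem stmt_4 {H : Type*} [NormedAddCommGroup H] [InnerProductSpace ℝ H] [CompleteSpace H]
    (β : ℝ) (hβ : 0 < β)
    (f : H → ℝ) (f' : H → H)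
    (hgrad : ∀ y, HasGradientAt f (f' y) y)
    (hconv : ∀ y z : H, f y + ⟪f' y, z - y⟫ + (β / 2) * ‖z - y‖ ^ 2 ≤ f z)
    (xstar : H) (hmin : ∀ y, f xstar ≤ f y)
    (x : ℝ → H) (hx : ContDiff ℝ 2 x)
    (hode : ∀ t : ℝ,
      deriv (deriv x) t + (2 * Real.sqrt β) • deriv x t + f' (x t) = 0)
    (hv0 : deriv x 0 = 0) :
    ∀ t : ℝ, 0 ≤ t →
      f (x t) - f xstar ≤
        Real.exp (-Real.sqrt β * t) *
          (f (x 0) - f xstar + (β / 2) * ‖x 0 - xstar‖ ^ 2) :=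
  stmt_4_general β hβ f f' hgrad hconv xstar x hx hode hv0
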